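/- arXiv:2404.07541 — 3 statements merged into one kernel-verified Lean document; each statement's English description precedes it below -/
import Mathlib

section
/- Pathwise identity used in the uniqueness proof: suppose F(ω) = c + ∫_{[0,T]×𝕏} Z_{(s,y)}(ω) ω(ds,dy) for all configurations ω, where Z is a predictable process (i.e., Z_{(s,y)}(ω) depends only on the restriction of ω strictly before time s). Then c = F(ω_∅) (the value of F at the empty configuration) and for every (t,x) and every configuration ω, H_{(t,x)} F(ω) := F(ω_t + δ_{(t,x)}) − F(ω_t) = Z_{(t,x)}(ω), where ω_t is the restriction of ω to times strictly before t. -/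
/-- The restriction `ω_t` of a configuration on `ℝ × 𝕏` to atoms with time strictly before
`t` (the operator `τ_t`). -/
noncomputable def restrictBefore {𝕏 : Type*} (t : ℝ) (m : Multiset (ℝ × 𝕏)) :
    Multiset (ℝ × 𝕏) :=
  m.filter fun q => q.1 < t

lemma restrict_restrict {𝕏 : Type*} (s t : ℝ) (h : s ≤ t) (m : Multiset (ℝ × 𝕏)) :
    restrictBefore s (restrictBefore t m) = restrictBefore s m := by
  unfold restrictBefore
  rw [Multiset.filter_filter]
  exact Multiset.filter_congr fun q _ => by
    constructor
    · exact fun hq => hq.1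
    · exact fun hq => ⟨hq, lt_of_lt_of_le hq h⟩

/-- Pathwise identity for the uniqueness proof: if
`F(ω) = c + ∫ Z_{(s,y)}(ω) ω(ds,dy)` for all configurations `ω`, with `Z` predictable
(`Z_{(s,y)}(ω)` depends only on the restriction of `ω` strictly before `s`), then
`c = F(ω_∅)` and `H_{(t,x)} F (ω) := F(ω_t + δ_{(t,x)}) - F(ω_t) = Z_{(t,x)}(ω)` for every
point `(t,x)` and configuration `ω`. -/
theorem pathwise_uniqueness {𝕏 : Type*} (F : Multiset (ℝ × 𝕏) → ℝ) (c : ℝ)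
    (Z : (ℝ × 𝕏) → Multiset (ℝ × 𝕏) → ℝ)
    (hpred : ∀ (p : ℝ × 𝕏) (m : Multiset (ℝ × 𝕏)), Z p m = Z p (restrictBefore p.1 m))
    (hrep : ∀ m : Multiset (ℝ × 𝕏), F m = c + (m.map fun p => Z p m).sum) :
    c = F 0 ∧
    ∀ (t : ℝ) (x : 𝕏) (m : Multiset (ℝ × 𝕏)),
      F (restrictBefore t m + {(t, x)}) - F (restrictBefore t m) = Z (t, x) m := by
  constructor
  · have := hrep 0
    simp at this
    linarith
  · intro t x m
    set mt := restrictBefore t m with hmtdef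
    have hmem : ∀ p ∈ mt, p.1 < t := fun p hp => (Multiset.mem_filter.mp hp).2
    have key : ∀ (n : Multiset (ℝ × 𝕏)) (p : ℝ × 𝕏), p.1 ≤ t →
        restrictBefore p.1 mt = restrictBefore p.1 m :=
      fun n p hp => restrict_restrict p.1 t hp m
    have hsing : ∀ (s : ℝ), s ≤ t →
        restrictBefore s (mt + {(t, x)}) = restrictBefore s m := by
      intro s hs
      unfold restrictBefore
      rw [Multiset.filter_add]
      have h1 : Multiset.filter (fun q => q.1 < s) ({(t, x)} : Multiset (ℝ × 𝕏)) = 0 := by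
        simp [Multiset.filter_singleton, not_lt.mpr hs]
      rw [h1, add_zero]
      exact restrict_restrict s t hs m
    have hZadd : ∀ p ∈ mt, Z p (mt + {(t, x)}) = Z p m := by
      intro p hp
      rw [hpred p (mt + {(t, x)}), hpred p m, hsing p.1 (le_of_lt (hmem p hp))]
    have hZmt : ∀ p ∈ mt, Z p mt = Z p m := by
      intro p hp
      rw [hpred p mt, hpred p m, restrict_restrict p.1 t (le_of_lt (hmem p hp)) m]
    have hZx : Z (t, x) (mt + {(t, x)}) = Z (t, x) m := by
      rw [hpred (t, x) (mt + {(t, x)}), hpred (t, x) m, hsing t le_rfl]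
    rw [hrep (mt + {(t, x)}), hrep mt]
    rw [Multiset.map_add, Multiset.sum_add]
    rw [Multiset.map_congr rfl hZadd, Multiset.map_congr rfl hZmt]
    simp [hZx]
end

section
/- For a point process H with predictable intensity λ defined by thinning a Poisson measure N on ℝ_+ × ℝ_+ via H_T = ∫_{(0,T]×ℝ_+} 1{θ ≤ λ_t} N(dt,dθ), the pseudo-Clark-Ocone integrand equals the thinning indicator: H_{(t,x)} H_T := (D_{(t,x)} H_T) ∘ τ_t = 1{x ≤ λ_t}, and consequently the Poisson imbedding representation H_T = H_T(ω_∅) + ∫_{[0,T]×ℝ_+} H_{(t,x)} H_T N(dt,dx) holds with H_T(ω_∅) = 0. -/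
/-- The pseudo-Clark-Ocone integrand operator `H_{(t,x)} F = (D_{(t,x)} F) ∘ τ_t`. -/
noncomputable def Hop {𝕏 : Type*} (F : Multiset (ℝ × 𝕏) → ℝ) (p : ℝ × 𝕏)
    (m : Multiset (ℝ × 𝕏)) : ℝ :=
  F (restrictBefore p.1 m + {p}) - F (restrictBefore p.1 m)

lemma sum_ite_card {α : Type*} (m : Multiset α) (P : α → Prop) [DecidablePred P] :
    (m.map fun p => if P p then (1:ℝ) else 0).sum = (m.filter P).card := by
  induction m using Multiset.induction_on with
  | empty => simp
  | cons a s ih =>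
    rw [Multiset.map_cons, Multiset.sum_cons, Multiset.filter_cons, ih]
    by_cases h : P a <;> simp [h, add_comm]

/-- For a point process `H` with predictable intensity `λ` obtained by thinning a Poisson
measure via `H_T = ∫_{(0,T]×ℝ_+} 1{θ ≤ λ_t} N(dt,dθ)`, the pseudo-Clark-Ocone integrand
is the thinning indicator `H_{(t,x)} H_T = 1{x ≤ λ_t}`, and the Poisson imbedding
representation `H_T = H_T(ω_∅) + ∫ H_{(t,x)} H_T N(dt,dx)` holds with `H_T(ω_∅) = 0`. -/
theorem poisson_imbedding_pseudo_CO (T : ℝ) (hT : 0 < T)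
    (lam : ℝ → Multiset (ℝ × ℝ) → ℝ)
    (hpred : ∀ (t : ℝ) (m : Multiset (ℝ × ℝ)), lam t m = lam t (restrictBefore t m))
    (hpos : ∀ (t : ℝ) (m : Multiset (ℝ × ℝ)), 0 ≤ lam t m)
    (HT : Multiset (ℝ × ℝ) → ℝ)
    (hHT : ∀ m : Multiset (ℝ × ℝ),
      HT m = (Multiset.card (m.filter fun p => 0 < p.1 ∧ p.1 ≤ T ∧ p.2 ≤ lam p.1 m) : ℝ)) :
    (∀ (m : Multiset (ℝ × ℝ)) (t x : ℝ), 0 < t → t ≤ T →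
      Hop HT (t, x) m = if x ≤ lam t m then 1 else 0) ∧
    HT 0 = 0 ∧
    (∀ m : Multiset (ℝ × ℝ), HT m = HT 0 + (m.map fun p => Hop HT p m).sum) := by
  classical
  have key : ∀ (m : Multiset (ℝ × ℝ)) (t x : ℝ),
      Hop HT (t, x) m = if 0 < t ∧ t ≤ T ∧ x ≤ lam t m then 1 else 0 := by
    intro m t x
    set m' := restrictBefore t m with hm'
    have hmem : ∀ q ∈ m', q.1 < t := by
      intro q hq
      rw [hm', restrictBefore] at hq
      exact (Multiset.mem_filter.mp hq).2
    have hself : Multiset.filter (fun q : ℝ × ℝ => q.1 < t) m' = m' :=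
      Multiset.filter_eq_self.mpr hmem
    have hlam1 : ∀ q : ℝ × ℝ, q.1 < t → lam q.1 (m' + {(t, x)}) = lam q.1 m' := by
      intro q hq
      rw [hpred q.1 (m' + {(t, x)}), hpred q.1 m']
      congr 1
      unfold restrictBefore
      rw [Multiset.filter_add, Multiset.filter_singleton]
      simp [not_lt.mpr hq.le]
    have hlamt : lam t (m' + {(t, x)}) = lam t m := by
      rw [hpred t (m' + {(t, x)})]
      have h1 : restrictBefore t (m' + {(t, x)}) = m' := by
        unfold restrictBefore
        rw [Multiset.filter_add, Multiset.filter_singleton]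
        simp [hself]
      rw [h1, hm', ← hpred]
    show HT (m' + {(t, x)}) - HT m' = _
    rw [hHT (m' + {(t, x)}), hHT m', Multiset.filter_add]
    have hcongr : Multiset.filter
        (fun p : ℝ × ℝ => 0 < p.1 ∧ p.1 ≤ T ∧ p.2 ≤ lam p.1 (m' + {(t, x)})) m' =
        Multiset.filter (fun p : ℝ × ℝ => 0 < p.1 ∧ p.1 ≤ T ∧ p.2 ≤ lam p.1 m') m' := by
      apply Multiset.filter_congr
      intro q hq
      rw [hlam1 q (hmem q hq)]
    rw [hcongr, Multiset.filter_singleton]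
    by_cases h : 0 < t ∧ t ≤ T ∧ x ≤ lam t m
    · have h' : 0 < (t, x).1 ∧ (t, x).1 ≤ T ∧ (t, x).2 ≤ lam (t, x).1 (m' + {(t, x)}) := by
        simpa [hlamt] using h
      simp only [if_pos h', if_pos h, Multiset.card_add, Multiset.card_singleton]
      push_cast
      ring
    · have h' : ¬ (0 < (t, x).1 ∧ (t, x).1 ≤ T ∧ (t, x).2 ≤ lam (t, x).1 (m' + {(t, x)})) := by
        simpa [hlamt] using h
      simp [if_neg h', if_neg h]
  refine ⟨?_, ?_, ?_⟩
  · intro m t x ht htT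
    rw [key]
    by_cases h : x ≤ lam t m <;> simp [h, ht, htT]
  · rw [hHT]; simp
  · intro m
    have h0 : HT 0 = 0 := by rw [hHT]; simp
    rw [h0, zero_add, hHT m]
    have hmap : (m.map fun p => Hop HT p m) =
        m.map fun p => if 0 < p.1 ∧ p.1 ≤ T ∧ p.2 ≤ lam p.1 m then (1:ℝ) else 0 := by
      apply Multiset.map_congr rfl
      intro p _
      have := key m p.1 p.2
      simpa using this
    rw [hmap, sum_ite_card]
end

section
/- Key pathwise evaluation in the uniqueness argument: for a configuration ω, a point (t,x) with t ∈ (0,T), and a process Z satisfying the representation F(ω') = c + ∫ Z_{(s,y)}(ω') ω'(ds,dy) for all ω', one has D_{(t,x)} F(ω_t) = ∫_{[0,T]×𝕏} (Z_{(s,y)}(ω_t + δ_{(t,x)}) − Z_{(s,y)}(ω_t)) ω_t(ds,dy) + Z_{(t,x)}(ω_t + δ_{(t,x)}), and if Z is predictable (Z_{(s,y)} depends only on the configuration strictly before s), the integral term vanishes since all atoms of ω_t occur strictly before t. -/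
/-- Key pathwise evaluation in the uniqueness argument: if
`F(ω') = c + ∫ Z_{(s,y)}(ω') ω'(ds,dy)` for every configuration `ω'`, then for a point
`(t,x)` with `t ∈ (0,T)`,
`D_{(t,x)} F(ω_t) = ∑_{(s,y) ∈ ω_t} (Z_{(s,y)}(ω_t + δ_{(t,x)}) - Z_{(s,y)}(ω_t))
  + Z_{(t,x)}(ω_t + δ_{(t,x)})`,
and if `Z` is predictable (depending only on the strict past), the sum term vanishes. -/
theorem pathwise_evaluation {𝕏 : Type*} (T : ℝ) (F : Multiset (ℝ × 𝕏) → ℝ) (c : ℝ)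
    (Z : (ℝ × 𝕏) → Multiset (ℝ × 𝕏) → ℝ)
    (hrep : ∀ m : Multiset (ℝ × 𝕏), F m = c + (m.map fun p => Z p m).sum)
    (t : ℝ) (x : 𝕏) (ht : 0 < t) (htT : t < T) (m : Multiset (ℝ × 𝕏)) :
    (F (restrictBefore t m + {(t, x)}) - F (restrictBefore t m)
      = ((restrictBefore t m).map fun p =>
          Z p (restrictBefore t m + {(t, x)}) - Z p (restrictBefore t m)).sum
        + Z (t, x) (restrictBefore t m + {(t, x)})) ∧
    ((∀ (p : ℝ × 𝕏) (m₁ m₂ : Multiset (ℝ × 𝕏)),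
        restrictBefore p.1 m₁ = restrictBefore p.1 m₂ → Z p m₁ = Z p m₂) →
      ((restrictBefore t m).map fun p =>
          Z p (restrictBefore t m + {(t, x)}) - Z p (restrictBefore t m)).sum = 0) := by
  set ω := restrictBefore t m with hω
  constructor
  · rw [hrep (ω + {(t, x)}), hrep ω]
    rw [Multiset.map_add, Multiset.sum_add]
    simp only [Multiset.map_singleton, Multiset.sum_singleton]
    rw [Multiset.sum_map_sub]
    ring
  · intro hpred
    rw [Multiset.sum_eq_zero]
    intro r hr
    simp only [Multiset.mem_map] at hr
    obtain ⟨p, hp, rfl⟩ := hr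
    have hpt : p.1 < t := (Multiset.mem_filter.mp hp).2
    have : restrictBefore p.1 (ω + {(t, x)}) = restrictBefore p.1 ω := by
      unfold restrictBefore
      rw [Multiset.filter_add]
      have : Multiset.filter (fun q : ℝ × 𝕏 => q.1 < p.1) {(t, x)} = 0 := by
        rw [Multiset.filter_eq_nil]
        intro a ha
        rw [Multiset.mem_singleton] at ha
        subst ha
        exact not_lt.mpr hpt.le
      rw [this, add_zero]
    rw [hpred p _ _ this, sub_self]
end
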